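/- arXiv:1903.10819 — 3 statements merged into one kernel-verified Lean document; each statement's English description precedes it below -/
import Mathlib

section
/- Fix finite types V₁, V₂, matrices a₁ : Matrix V₁ V₁ ℂ, a₂ : Matrix V₂ V₂ ℂ, and vertices e₁, f₁ ∈ V₁ and e₂, f₂ ∈ V₂. On (V₁ × V₂ × V₂) ⊕ (V₁ × V₂) define R₁ = 1 + ( ((a₁ − 1) ⊗ E_{e₂} ⊗ E_{f₂}) ⊕ ((a₁ − 1) ⊗ E_{f₂}) ) and R₂ = 1 + ( (E_{e₁} ⊗ (a₂ − 1) ⊗ 1 + E_{e₁}^⊥ ⊗ 1 ⊗ (a₂ − 1)) ⊕ (1 ⊗ (a₂ − 1)) ), and let Z = R₂ · R₁. Then in ℂ[[z]], η_{Z, inr (f₁,f₂)} = η_{a₁,f₁} ∘ η_{a₂,f₂}, where ∘ denotes substitution of the power series η_{a₂,f₂} (which has zero constant term) into η_{a₁,f₁}. That is, the η-series of Z in the vector state at the second root inr (f₁,f₂) is the η-series of the monotone multiplicative convolution ν₁ ↻ ν₂ of the distributions ν₁ of a₁ at f₁ and ν₂ of a₂ at f₂, characterized by η_{ν₁↻ν₂}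 = η_{ν₁} ∘ η_{ν₂}. -/
open Matrix PowerSeries
open scoped Kronecker

/-- The moment generating series (without constant term) of a matrix `m` in the
vector state at `u`: the `n`-th coefficient is `(m^n) u u` for `n ≥ 1`. -/
noncomputable def psiSeries {W : Type*} [Fintype W] [DecidableEq W]
    (m : Matrix W W ℂ) (u : W) : PowerSeries ℂ :=
  PowerSeries.mk fun n => if n = 0 then 0 else (m ^ n) u u

/-- The `η`-series of a matrix `m` in the vector state at `u`:
`η = Ψ·(1 + Ψ)⁻¹`. Its coefficients count root-to-root first-return walks. -/
noncomputable def etaSeries {W : Type*} [Fintype W] [DecidableEq W]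
    (m : Matrix W W ℂ) (u : W) : PowerSeries ℂ :=
  psiSeries m u * (1 + psiSeries m u)⁻¹

/-- Substitution of a power series `g` with zero constant term into `f`:
`(f ∘ g)ₙ = ∑_{r ≤ n} fᵣ · (gʳ)ₙ` (the coefficients of `gʳ` below degree `r`
vanish when `g` has zero constant term, so the finite sum suffices). -/
noncomputable def composeSeries {R : Type*} [CommSemiring R]
    (f g : PowerSeries R) : PowerSeries R :=
  PowerSeries.mk fun n =>
    ∑ r ∈ Finset.range (n + 1), PowerSeries.coeff r f * PowerSeries.coeff n (g ^ r)

set_option linter.unusedSectionVars false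

section CcombAux
variable {R : Type*} [CommRing R]

lemma coeff_pow_eq_zero' {g : PowerSeries R} (hg : constantCoeff g = 0) :
    ∀ {r n : ℕ}, n < r → coeff n (g ^ r) = 0 := by
  intro r
  induction r with
  | zero => intro n h; omega
  | succ r ih =>
    intro n h
    rw [pow_succ, coeff_mul]
    apply Finset.sum_eq_zero
    rintro ⟨p, q⟩ hpq
    rw [Finset.HasAntidiagonal.mem_antidiagonal] at hpq
    rcases lt_or_ge p r with hp | hp
    · rw [ih hp, zero_mul]
    · have hq : q = 0 := by omega
      subst hq
      rw [coeff_zero_eq_constantCoeff, hg, mul_zero]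

lemma coeff_composeSeries_ext {g : PowerSeries R} (f : PowerSeries R)
    (hg : constantCoeff g = 0) {n N : ℕ} (h : n < N) :
    coeff n (composeSeries f g) = ∑ r ∈ Finset.range N, coeff r f * coeff n (g ^ r) := by
  rw [composeSeries, coeff_mk]
  apply Finset.sum_subset
  · intro x hx; simp only [Finset.mem_range] at *; omega
  · intro r hr hrn
    simp only [Finset.mem_range] at hr hrn
    rw [coeff_pow_eq_zero' hg (by omega), mul_zero]

lemma coeff_eval₂ (g : PowerSeries R) (hg : constantCoeff g = 0) (P : Polynomial R) (n : ℕ) :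
    coeff n (Polynomial.eval₂ (C (R := R)) g P)
      = ∑ r ∈ Finset.range (n + 1), P.coeff r * coeff n (g ^ r) := by
  rw [Polynomial.eval₂_eq_sum, Polynomial.sum, map_sum]
  have step : ∀ e ∈ P.support, coeff n (C (P.coeff e) * g ^ e)
      = P.coeff e * coeff n (g ^ e) := fun e _ => coeff_C_mul _ _ _
  rw [Finset.sum_congr rfl step]
  rw [show (∑ e ∈ P.support, P.coeff e * coeff n (g ^ e))
      = ∑ e ∈ P.support ∪ Finset.range (n+1), P.coeff e * coeff n (g ^ e) from
    Finset.sum_subset Finset.subset_union_left (by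
      intro x _ hx
      simp only [Polynomial.mem_support_iff, not_not] at hx
      rw [hx, zero_mul])]
  symm
  apply Finset.sum_subset Finset.subset_union_right
  intro x hx hxr
  simp only [Finset.mem_range, not_lt] at hxr
  rw [coeff_pow_eq_zero' hg (by omega), mul_zero]

lemma coeff_composeSeries_trunc {g : PowerSeries R} (f : PowerSeries R)
    (hg : constantCoeff g = 0) {n N : ℕ} (h : n < N) :
    coeff n (composeSeries f g) = coeff n (Polynomial.eval₂ (C (R := R)) g (trunc N f)) := by
  rw [coeff_eval₂ g hg, coeff_composeSeries_ext f hg (show n < n + 1 by omega)]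
  apply Finset.sum_congr rfl
  intro r hr
  simp only [Finset.mem_range] at hr
  rw [coeff_trunc, if_pos (by omega)]

lemma composeSeries_zero (g : PowerSeries R) : composeSeries 0 g = 0 := by
  ext n
  simp [composeSeries, coeff_mk]

lemma composeSeries_one {g : PowerSeries R} : composeSeries (1 : PowerSeries R) g = 1 := by
  ext n
  rw [composeSeries, coeff_mk]
  rw [Finset.sum_eq_single 0]
  · simp
  · intro r hr hr0
    rw [coeff_one, if_neg hr0, zero_mul]
  · simp

lemma composeSeries_add (f₁ f₂ g : PowerSeries R) :
    composeSeries (f₁ + f₂) g = composeSeries f₁ g + composeSeries f₂ g := by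
  ext n
  simp [composeSeries, coeff_mk, add_mul, Finset.sum_add_distrib]

lemma composeSeries_mul {g : PowerSeries R} (hg : constantCoeff g = 0) (f₁ f₂ : PowerSeries R) :
    composeSeries (f₁ * f₂) g = composeSeries f₁ g * composeSeries f₂ g := by
  ext n
  have key : ∀ P Q : Polynomial R, (∀ r ≤ n, P.coeff r = Q.coeff r) →
      coeff n (Polynomial.eval₂ (C (R := R)) g P) = coeff n (Polynomial.eval₂ (C (R := R)) g Q) := by
    intro P Q hPQ
    rw [coeff_eval₂ g hg, coeff_eval₂ g hg]
    apply Finset.sum_congr rfl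
    intro r hr
    simp only [Finset.mem_range] at hr
    rw [hPQ r (by omega)]
  rw [coeff_composeSeries_trunc (f₁ * f₂) hg (show n < n + 1 by omega)]
  rw [key (trunc (n+1) (f₁ * f₂)) (trunc (n+1) f₁ * trunc (n+1) f₂) ?_]
  · rw [Polynomial.eval₂_mul, coeff_mul, coeff_mul]
    apply Finset.sum_congr rfl
    rintro ⟨p, q⟩ hpq
    rw [Finset.HasAntidiagonal.mem_antidiagonal] at hpq
    rw [← coeff_composeSeries_trunc f₁ hg (show p < n + 1 by omega),
      ← coeff_composeSeries_trunc f₂ hg (show q < n + 1 by omega)]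
  · intro r hr
    rw [coeff_trunc, if_pos (by omega), Polynomial.coeff_mul, coeff_mul]
    apply Finset.sum_congr rfl
    rintro ⟨p, q⟩ hpq
    rw [Finset.HasAntidiagonal.mem_antidiagonal] at hpq
    rw [coeff_trunc, if_pos (by omega), coeff_trunc, if_pos (by omega)]

lemma composeSeries_X {g : PowerSeries R} (hg : constantCoeff g = 0) :
    composeSeries X g = g := by
  ext n
  rw [composeSeries, coeff_mk, Finset.sum_eq_single 1]
  · simp
  · intro r hr hr1
    rcases Nat.eq_zero_or_pos r with h0 | h0
    · subst h0; simp
    · rw [coeff_X, if_neg hr1, zero_mul]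
  · intro h1
    simp only [Finset.mem_range, not_lt] at h1
    have : n = 0 := by omega
    subst this
    rw [pow_one, coeff_zero_eq_constantCoeff, hg, mul_zero]

lemma composeSeries_C (g : PowerSeries R) (c : R) :
    composeSeries (C c) g = C c := by
  ext n
  rw [composeSeries, coeff_mk, Finset.sum_eq_single 0]
  · simp [coeff_C]
  · intro r hr hr0
    rw [coeff_C, if_neg hr0, zero_mul]
  · simp

lemma constantCoeff_composeSeries (f g : PowerSeries R) :
    constantCoeff (composeSeries f g) = constantCoeff f := by
  rw [← coeff_zero_eq_constantCoeff, composeSeries, coeff_mk]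
  simp

noncomputable def composeHom (g : PowerSeries R) (hg : constantCoeff g = 0) :
    PowerSeries R →+* PowerSeries R where
  toFun f := composeSeries f g
  map_one' := composeSeries_one
  map_mul' := composeSeries_mul hg
  map_zero' := composeSeries_zero g
  map_add' f₁ f₂ := composeSeries_add f₁ f₂ g

section Res
variable {W : Type*} [Fintype W] [DecidableEq W]

noncomputable def resolventM (m : Matrix W W ℂ) : Matrix W W (PowerSeries ℂ) :=
  Matrix.of fun i j => PowerSeries.mk fun n => (m ^ n) i j

lemma resolventM_left (m : Matrix W W ℂ) :
    (1 - (X : PowerSeries ℂ) • m.map (C (R := ℂ))) * resolventM m = 1 := by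
  rw [sub_mul, one_mul, Matrix.smul_mul]
  ext i j n
  have hentry : ((m.map (C (R := ℂ))) * resolventM m) i j
      = ∑ x, C (m i x) * PowerSeries.mk (fun n => (m ^ n) x j) := by
    simp [Matrix.mul_apply, resolventM, Matrix.map_apply]
  rw [Matrix.sub_apply, Matrix.smul_apply, map_sub, smul_eq_mul]
  cases n with
  | zero =>
    rw [coeff_zero_X_mul, sub_zero]
    simp only [resolventM, Matrix.of_apply, coeff_mk, pow_zero]
    by_cases h : i = j <;> simp [Matrix.one_apply, h]
  | succ n =>
    rw [coeff_succ_X_mul, hentry, map_sum]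
    have : ∀ x, (coeff n) (C (m i x) * PowerSeries.mk fun k => (m ^ k) x j)
        = m i x * (m ^ n) x j := by
      intro x; rw [coeff_C_mul, coeff_mk]
    rw [Finset.sum_congr rfl fun x _ => this x]
    have hpow : ∑ x, m i x * (m ^ n) x j = (m ^ (n+1)) i j := by
      rw [pow_succ']
      simp [Matrix.mul_apply]
    rw [hpow]
    simp only [resolventM, Matrix.of_apply, coeff_mk, sub_self]
    by_cases h : i = j <;> simp [Matrix.one_apply, h, coeff_one]

lemma resolventM_right (m : Matrix W W ℂ) :
    resolventM m * (1 - (X : PowerSeries ℂ) • m.map (C (R := ℂ))) = 1 := by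
  rw [mul_sub, mul_one, Matrix.mul_smul]
  ext i j n
  have hentry : (resolventM m * (m.map (C (R := ℂ)))) i j
      = ∑ x, PowerSeries.mk (fun n => (m ^ n) i x) * C (m x j) := by
    simp [Matrix.mul_apply, resolventM, Matrix.map_apply]
  rw [Matrix.sub_apply, Matrix.smul_apply, map_sub, smul_eq_mul]
  cases n with
  | zero =>
    rw [coeff_zero_X_mul, sub_zero]
    simp only [resolventM, Matrix.of_apply, coeff_mk, pow_zero]
    by_cases h : i = j <;> simp [Matrix.one_apply, h]
  | succ n =>
    rw [coeff_succ_X_mul, hentry, map_sum]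
    have : ∀ x, (coeff n) ((PowerSeries.mk fun k => (m ^ k) i x) * C (m x j))
        = (m ^ n) i x * m x j := by
      intro x; rw [mul_comm, coeff_C_mul, coeff_mk, mul_comm]
    rw [Finset.sum_congr rfl fun x _ => this x]
    have hpow : ∑ x, (m ^ n) i x * m x j = (m ^ (n+1)) i j := by
      rw [pow_succ]
      simp [Matrix.mul_apply]
    rw [hpow]
    simp only [resolventM, Matrix.of_apply, coeff_mk, sub_self]
    by_cases h : i = j <;> simp [Matrix.one_apply, h, coeff_one]

lemma resolventM_diag (m : Matrix W W ℂ) (u : W) :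
    resolventM m u u = 1 + psiSeries m u := by
  apply PowerSeries.ext
  intro n
  simp only [resolventM, Matrix.of_apply, coeff_mk, map_add, psiSeries]
  cases n with
  | zero => simp
  | succ n => simp [coeff_one]

lemma constantCoeff_psiSeries (m : Matrix W W ℂ) (u : W) :
    constantCoeff (psiSeries m u) = 0 := by
  rw [← coeff_zero_eq_constantCoeff, psiSeries, coeff_mk, if_pos rfl]

end Res

section Helpers
variable {V₁ V₂ : Type*} [Fintype V₁] [DecidableEq V₁] [Fintype V₂] [DecidableEq V₂]

lemma map_kronecker' {α β : Type*} [CommSemiring α] [CommSemiring β]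
    (f : α →+* β) (A : Matrix V₁ V₁ α) (B : Matrix V₂ V₂ α) :
    (A ⊗ₖ B).map f = (A.map f) ⊗ₖ (B.map f) := by
  ext ⟨i, j⟩ ⟨k, l⟩
  simp [Matrix.kroneckerMap_apply, Matrix.map_apply]

lemma sub_kronecker' {α : Type*} [CommRing α]
    (A B : Matrix V₁ V₁ α) (C : Matrix V₂ V₂ α) :
    (A - B) ⊗ₖ C = A ⊗ₖ C - B ⊗ₖ C := by
  ext ⟨i, j⟩ ⟨k, l⟩
  simp [Matrix.kroneckerMap_apply, sub_mul]

lemma kronecker_sub' {α : Type*} [CommRing α]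
    (A : Matrix V₁ V₁ α) (B C : Matrix V₂ V₂ α) :
    A ⊗ₖ (B - C) = A ⊗ₖ B - A ⊗ₖ C := by
  ext ⟨i, j⟩ ⟨k, l⟩
  simp [Matrix.kroneckerMap_apply, mul_sub]

lemma stdBasis_sandwich {α : Type*} [CommRing α] (f₂ : V₂) (M : Matrix V₂ V₂ α) :
    single f₂ f₂ (1 : α) * M * single f₂ f₂ (1 : α)
      = M f₂ f₂ • single f₂ f₂ (1 : α) := by
  ext i j
  simp only [Matrix.mul_apply, Matrix.single, Matrix.smul_apply, ite_and,
    Matrix.of_apply, smul_eq_mul, boole_mul, mul_boole, Finset.sum_ite_eq,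
    Finset.sum_ite_eq', Finset.mem_univ, if_true]
  by_cases h1 : f₂ = i <;> by_cases h2 : f₂ = j <;> simp [h1, h2]

lemma mul_stdBasis_mul {α : Type*} [CommRing α] (f₂ : V₂) (M N : Matrix V₂ V₂ α) (i j : V₂) :
    (M * single f₂ f₂ (1 : α) * N) i j = M i f₂ * N f₂ j := by
  simp [Matrix.mul_apply, Matrix.single, ite_and, Finset.sum_ite_eq,
    Finset.sum_ite_eq', mul_comm]

lemma map_stdBasis (f₂ : V₂) :
    (single f₂ f₂ (1 : ℂ)).map (C (R := ℂ)) = single f₂ f₂ (1 : PowerSeries ℂ) := by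
  ext i j
  simp [Matrix.map_apply, Matrix.single, apply_ite (C (R := ℂ))]

lemma fromBlocks_pow {α : Type*} [CommRing α]
    (A : Matrix V₁ V₁ α) (D : Matrix V₂ V₂ α) (n : ℕ) :
    (Matrix.fromBlocks A 0 0 D) ^ n = Matrix.fromBlocks (A ^ n) 0 0 (D ^ n) := by
  induction n with
  | zero => simp [Matrix.fromBlocks_one]
  | succ n ih =>
    rw [pow_succ, pow_succ, pow_succ, ih, Matrix.fromBlocks_multiply]
    simp

end Helpers

set_option maxHeartbeats 1600000 in
theorem core_eta {V₁ V₂ : Type*} [Fintype V₁] [DecidableEq V₁] [Fintype V₂] [DecidableEq V₂]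
    (a₁ : Matrix V₁ V₁ ℂ) (a₂ : Matrix V₂ V₂ ℂ) (f₁ : V₁) (f₂ : V₂) :
    etaSeries ((1 + (1 : Matrix V₁ V₁ ℂ) ⊗ₖ (a₂ - 1))
        * (1 + (a₁ - 1) ⊗ₖ Matrix.single f₂ f₂ (1 : ℂ))) (f₁, f₂)
      = composeSeries (etaSeries a₁ f₁) (etaSeries a₂ f₂) := by
  classical
  set bC : Matrix (V₁ × V₂) (V₁ × V₂) ℂ :=
    (1 + (1 : Matrix V₁ V₁ ℂ) ⊗ₖ (a₂ - 1))
      * (1 + (a₁ - 1) ⊗ₖ Matrix.single f₂ f₂ (1 : ℂ)) with hbC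
  set A₁ : Matrix V₁ V₁ (PowerSeries ℂ) := a₁.map (C (R := ℂ)) with hA₁
  set A₂ : Matrix V₂ V₂ (PowerSeries ℂ) := a₂.map (C (R := ℂ)) with hA₂
  set S : Matrix V₂ V₂ (PowerSeries ℂ) := resolventM a₂ with hS
  set σ : Matrix V₂ V₂ (PowerSeries ℂ) := (X : PowerSeries ℂ) • A₂ with hσ
  have hS₁ : (1 - σ) * S = 1 := resolventM_left a₂
  have hS₂ : S * (1 - σ) = 1 := resolventM_right a₂
  set t : PowerSeries ℂ := psiSeries a₂ f₂ with ht
  have hSd : S f₂ f₂ = 1 + t := resolventM_diag a₂ f₂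
  have ht0 : constantCoeff t = 0 := constantCoeff_psiSeries a₂ f₂
  set u : PowerSeries ℂ := (1 + t)⁻¹ with hudef
  have hu : (1 + t) * u = 1 :=
    PowerSeries.mul_inv_cancel _ (by simp [map_add, ht0])
  set η : PowerSeries ℂ := etaSeries a₂ f₂ with hηdef
  have hη : η = t * u := rfl
  have hη0 : constantCoeff η = 0 := by rw [hη, _root_.map_mul, ht0, zero_mul]
  set φ : PowerSeries ℂ →+* PowerSeries ℂ := composeHom η hη0 with hφ
  have hφapp : ∀ f, φ f = composeSeries f η := fun _ => rfl
  set T : Matrix V₁ V₁ (PowerSeries ℂ) := (resolventM a₁).map φ with hT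
  have hmapres : ((1 : Matrix V₁ V₁ (PowerSeries ℂ))
      - (X : PowerSeries ℂ) • A₁).map φ = 1 - η • A₁ := by
    apply Matrix.ext
    intro i j
    rw [Matrix.map_apply, Matrix.sub_apply, Matrix.sub_apply, Matrix.smul_apply,
      Matrix.smul_apply, smul_eq_mul, smul_eq_mul, _root_.map_sub, _root_.map_mul,
      hφapp, hφapp, composeSeries_X hη0]
    congr 1
    · by_cases h : i = j <;> simp [Matrix.one_apply, h, hφapp, composeSeries_one,
        composeSeries_zero]
    · congr 1
      rw [hA₁, Matrix.map_apply, hφapp, composeSeries_C]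
  have hT₁ : (1 - η • A₁) * T = 1 := by
    have h := congrArg (fun M => M.map ⇑φ) (resolventM_left a₁)
    rwa [Matrix.map_mul, hmapres, Matrix.map_one _ (map_zero φ) (map_one φ)] at h
  set Ψ₁ : PowerSeries ℂ := psiSeries a₁ f₁ with hΨ₁
  have hΨ₁0 : constantCoeff Ψ₁ = 0 := constantCoeff_psiSeries a₁ f₁
  have hTd : T f₁ f₁ = 1 + composeSeries Ψ₁ η := by
    rw [hT, Matrix.map_apply, resolventM_diag, _root_.map_add, _root_.map_one, hφapp, ← hΨ₁]
  set E : Matrix V₂ V₂ (PowerSeries ℂ) := Matrix.single f₂ f₂ 1 with hE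
  set G : Matrix V₂ V₂ (PowerSeries ℂ) := (S - 1) * E * S with hG
  have hneed1 : (1 - σ) * G = σ * E * S := by
    have h : (1 - σ) * (S - 1) = σ := by
      rw [mul_sub, hS₁, mul_one, sub_sub_cancel]
    rw [hG, show (1 - σ) * ((S - 1) * E * S) = ((1 - σ) * (S - 1)) * E * S by
      rw [← Matrix.mul_assoc, ← Matrix.mul_assoc], h]
  have hsand : E * (S - 1) * E = t • E := by
    rw [hE, stdBasis_sandwich]
    congr 1
    rw [Matrix.sub_apply, hSd, Matrix.one_apply_eq, add_sub_cancel_left]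
  have hneed2 : (σ * E) * G = t • (σ * E * S) := by
    rw [hG, show σ * E * ((S - 1) * E * S) = σ * (E * (S - 1) * E) * S by
      simp only [Matrix.mul_assoc], hsand, Matrix.mul_smul, Matrix.smul_mul]
  set F : Matrix V₁ V₁ (PowerSeries ℂ) := u • ((A₁ - 1) * T) with hF
  have hinner : T - η • (A₁ * T) = 1 := by
    have h := hT₁
    rwa [sub_mul, one_mul, Matrix.smul_mul] at h
  have hbr : F - (A₁ - 1) - t • ((A₁ - 1) * F) = 0 := by
    have hu1 : u + η = 1 := by
      rw [hη, show u + t * u = (1 + t) * u by ring, hu]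
    have hin2 : u • T - 1 - η • ((A₁ - 1) * T) = 0 := by
      rw [sub_mul, one_mul, smul_sub]
      have hsum : u • T + η • T = T := by rw [← add_smul, hu1, one_smul]
      have : u • T - 1 - (η • (A₁ * T) - η • T)
          = (u • T + η • T) - η • (A₁ * T) - 1 := by abel
      rw [this, hsum, hinner, sub_self]
    calc F - (A₁ - 1) - t • ((A₁ - 1) * F)
        = (A₁ - 1) * (u • T - 1 - η • ((A₁ - 1) * T)) := by
          rw [hF, hη]
          simp only [Matrix.mul_smul, mul_sub, mul_one, smul_smul, smul_sub]
          try abel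
      _ = (A₁ - 1) * 0 := by rw [hin2]
      _ = 0 := by rw [mul_zero]
  set Y : Matrix (V₁ × V₂) (V₁ × V₂) (PowerSeries ℂ) := 1 ⊗ₖ S + F ⊗ₖ G with hY
  set H : Matrix V₂ V₂ (PowerSeries ℂ) := σ * E * S with hH
  have hcomb : F ⊗ₖ H - (A₁ - 1) ⊗ₖ H - (t • ((A₁ - 1) * F)) ⊗ₖ H = 0 := by
    rw [← sub_kronecker', ← sub_kronecker', hbr, zero_kronecker]
  have hleft : ((1 : Matrix V₁ V₁ (PowerSeries ℂ)) ⊗ₖ (1 - σ)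
      - (A₁ - 1) ⊗ₖ (σ * E)) * Y = 1 := by
    rw [hY]
    calc ((1 : Matrix V₁ V₁ (PowerSeries ℂ)) ⊗ₖ (1 - σ) - (A₁ - 1) ⊗ₖ (σ * E))
          * (1 ⊗ₖ S + F ⊗ₖ G)
        = (1 ⊗ₖ (1 - σ)) * (1 ⊗ₖ S) + (1 ⊗ₖ (1 - σ)) * (F ⊗ₖ G)
            - (((A₁ - 1) ⊗ₖ (σ * E)) * (1 ⊗ₖ S)
              + ((A₁ - 1) ⊗ₖ (σ * E)) * (F ⊗ₖ G)) := by
          rw [sub_mul, mul_add, mul_add]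
      _ = (1 * 1) ⊗ₖ ((1 - σ) * S) + (1 * F) ⊗ₖ ((1 - σ) * G)
            - (((A₁ - 1) * 1) ⊗ₖ ((σ * E) * S)
              + ((A₁ - 1) * F) ⊗ₖ ((σ * E) * G)) := by
          rw [← Matrix.mul_kronecker_mul, ← Matrix.mul_kronecker_mul,
            ← Matrix.mul_kronecker_mul, ← Matrix.mul_kronecker_mul]
      _ = 1 + F ⊗ₖ H - ((A₁ - 1) ⊗ₖ H + (t • ((A₁ - 1) * F)) ⊗ₖ H) := by
          rw [one_mul, one_mul, mul_one, hS₁, Matrix.one_kronecker_one, hneed1,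
            hneed2, Matrix.kronecker_smul, ← Matrix.smul_kronecker]
      _ = 1 + (F ⊗ₖ H - (A₁ - 1) ⊗ₖ H - (t • ((A₁ - 1) * F)) ⊗ₖ H) := by abel
      _ = 1 := by rw [hcomb, add_zero]
  have hbmap : (1 : Matrix (V₁ × V₂) (V₁ × V₂) (PowerSeries ℂ))
      - (X : PowerSeries ℂ) • (bC.map (C (R := ℂ)))
      = (1 : Matrix V₁ V₁ (PowerSeries ℂ)) ⊗ₖ (1 - σ) - (A₁ - 1) ⊗ₖ (σ * E) := by
    have hmap1 : bC.map (C (R := ℂ))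
        = (1 + (1 : Matrix V₁ V₁ (PowerSeries ℂ)) ⊗ₖ (A₂ - 1))
          * (1 + (A₁ - 1) ⊗ₖ E) := by
      rw [hbC, Matrix.map_mul]
      congr 1
      · rw [Matrix.map_add _ (fun a b => _root_.map_add (C (R := ℂ)) a b) _ _,
          Matrix.map_one _ (map_zero (C (R := ℂ))) (map_one (C (R := ℂ))),
          map_kronecker', Matrix.map_one _ (map_zero (C (R := ℂ))) (map_one (C (R := ℂ))),
          Matrix.map_sub _ (fun a b => _root_.map_sub (C (R := ℂ)) a b) _ _,
          Matrix.map_one _ (map_zero (C (R := ℂ))) (map_one (C (R := ℂ))), hA₂]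
      · rw [Matrix.map_add _ (fun a b => _root_.map_add (C (R := ℂ)) a b) _ _,
          Matrix.map_one _ (map_zero (C (R := ℂ))) (map_one (C (R := ℂ))),
          map_kronecker', Matrix.map_sub _ (fun a b => _root_.map_sub (C (R := ℂ)) a b) _ _,
          Matrix.map_one _ (map_zero (C (R := ℂ))) (map_one (C (R := ℂ))), map_stdBasis, hA₁, hE]
    have hone : (1 : Matrix (V₁ × V₂) (V₁ × V₂) (PowerSeries ℂ))
        + (1 : Matrix V₁ V₁ (PowerSeries ℂ)) ⊗ₖ (A₂ - 1)
        = (1 : Matrix V₁ V₁ (PowerSeries ℂ)) ⊗ₖ A₂ := by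
      rw [kronecker_sub', Matrix.one_kronecker_one]
      abel
    have hprod : ((1 : Matrix V₁ V₁ (PowerSeries ℂ)) ⊗ₖ A₂) * (1 + (A₁ - 1) ⊗ₖ E)
        = (1 : Matrix V₁ V₁ (PowerSeries ℂ)) ⊗ₖ A₂ + (A₁ - 1) ⊗ₖ (A₂ * E) := by
      rw [mul_add, mul_one, ← Matrix.mul_kronecker_mul, one_mul]
    rw [hmap1, hone, hprod, smul_add, ← Matrix.kronecker_smul, ← hσ,
      ← Matrix.kronecker_smul,
      show (X : PowerSeries ℂ) • (A₂ * E) = σ * E from by rw [hσ, Matrix.smul_mul],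
      sub_add_eq_sub_sub]
    congr 1
    rw [kronecker_sub', Matrix.one_kronecker_one]
  have hYres : resolventM bC = Y := by
    have h2 : ((1 : Matrix (V₁ × V₂) (V₁ × V₂) (PowerSeries ℂ))
        - (X : PowerSeries ℂ) • (bC.map (C (R := ℂ)))) * Y = 1 := by
      rw [hbmap]; exact hleft
    calc resolventM bC
        = resolventM bC * (((1 : Matrix (V₁ × V₂) (V₁ × V₂) (PowerSeries ℂ))
            - (X : PowerSeries ℂ) • (bC.map (C (R := ℂ)))) * Y) := by rw [h2, mul_one]
      _ = (resolventM bC * ((1 : Matrix (V₁ × V₂) (V₁ × V₂) (PowerSeries ℂ))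
            - (X : PowerSeries ℂ) • (bC.map (C (R := ℂ))))) * Y := by rw [Matrix.mul_assoc]
      _ = Y := by rw [resolventM_right, one_mul]
  set Ψb : PowerSeries ℂ := psiSeries bC (f₁, f₂) with hΨb
  have hb0 : constantCoeff Ψb = 0 := constantCoeff_psiSeries bC (f₁, f₂)
  have hdiag : 1 + Ψb = S f₂ f₂ + F f₁ f₁ * G f₂ f₂ := by
    have hYe : resolventM bC (f₁, f₂) (f₁, f₂) = Y (f₁, f₂) (f₁, f₂) := by rw [hYres]
    rw [resolventM_diag] at hYe
    rw [hYe, hY, Matrix.add_apply, Matrix.kronecker_apply, Matrix.kronecker_apply,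
      Matrix.one_apply_eq, one_mul]
  have hGd : G f₂ f₂ = t * (1 + t) := by
    rw [hG, hE, mul_stdBasis_mul, Matrix.sub_apply, hSd, Matrix.one_apply_eq,
      add_sub_cancel_left]
  have hFd : F f₁ f₁ = u * ((A₁ * T) f₁ f₁ - T f₁ f₁) := by
    rw [hF, Matrix.smul_apply, smul_eq_mul, sub_mul, one_mul, Matrix.sub_apply]
  have he2 : T f₁ f₁ - (t * u) * ((A₁ * T) f₁ f₁) = 1 := by
    have h := congrFun (congrFun hinner f₁) f₁
    rwa [Matrix.sub_apply, Matrix.smul_apply, smul_eq_mul, Matrix.one_apply_eq, hη] at h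
  have hkey : 1 + Ψb = T f₁ f₁ := by
    have e1 : 1 + Ψb = (1 + t) + (u * ((A₁ * T) f₁ f₁ - T f₁ f₁)) * (t * (1 + t)) := by
      rw [hdiag, hSd, hGd, hFd]
    linear_combination e1 - (1 + t) * he2 - (t * T f₁ f₁) * hu
  have hcomp : Ψb = composeSeries Ψ₁ η := add_left_cancel (hkey.trans hTd)
  have hA : constantCoeff (1 + Ψ₁) ≠ 0 := by simp [map_add, hΨ₁0]
  have hB : constantCoeff (1 + Ψb) ≠ 0 := by simp [map_add, hb0]
  have hplus : composeSeries (1 + Ψ₁) η = 1 + Ψb := by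
    rw [composeSeries_add, composeSeries_one, hcomp]
  have h1 : composeSeries ((1 + Ψ₁)⁻¹) η * (1 + Ψb) = 1 := by
    rw [← hplus, ← composeSeries_mul hη0, PowerSeries.inv_mul_cancel _ hA,
      composeSeries_one]
  have hinv : composeSeries ((1 + Ψ₁)⁻¹) η = (1 + Ψb)⁻¹ := by
    calc composeSeries ((1 + Ψ₁)⁻¹) η
        = composeSeries ((1 + Ψ₁)⁻¹) η * ((1 + Ψb) * (1 + Ψb)⁻¹) := by
          rw [PowerSeries.mul_inv_cancel _ hB, mul_one]
      _ = (composeSeries ((1 + Ψ₁)⁻¹) η * (1 + Ψb)) * (1 + Ψb)⁻¹ := by ring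
      _ = (1 + Ψb)⁻¹ := by rw [h1, one_mul]
  show etaSeries bC (f₁, f₂) = composeSeries (etaSeries a₁ f₁) η
  rw [etaSeries, etaSeries, composeSeries_mul hη0, hinv, ← hΨ₁, ← hΨb, hcomp]

end CcombAux

/-- the `η`-series of `Z = R₂R₁` at the second root of the c-comb loop
product of birooted graphs is the `η`-series of the monotone multiplicative
convolution `ν₁ ↻ ν₂`, i.e. `η_{ν₁} ∘ η_{ν₂}` (Theorem 5.1 of the paper). -/
theorem ccomb_loop_product_eta_series_second_root
    {V₁ V₂ : Type*} [Fintype V₁] [DecidableEq V₁] [Fintype V₂] [DecidableEq V₂]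
    (a₁ : Matrix V₁ V₁ ℂ) (a₂ : Matrix V₂ V₂ ℂ)
    (e₁ f₁ : V₁) (e₂ f₂ : V₂)
    (R₁ R₂ Z : Matrix ((V₁ × V₂ × V₂) ⊕ (V₁ × V₂)) ((V₁ × V₂ × V₂) ⊕ (V₁ × V₂)) ℂ)
    (hR₁ : R₁ = 1 + Matrix.fromBlocks
      ((a₁ - 1) ⊗ₖ (Matrix.single e₂ e₂ (1 : ℂ) ⊗ₖ Matrix.single f₂ f₂ (1 : ℂ)))
      0 0
      ((a₁ - 1) ⊗ₖ Matrix.single f₂ f₂ (1 : ℂ)))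
    (hR₂ : R₂ = 1 + Matrix.fromBlocks
      (Matrix.single e₁ e₁ (1 : ℂ) ⊗ₖ ((a₂ - 1) ⊗ₖ (1 : Matrix V₂ V₂ ℂ))
        + (1 - Matrix.single e₁ e₁ (1 : ℂ)) ⊗ₖ ((1 : Matrix V₂ V₂ ℂ) ⊗ₖ (a₂ - 1)))
      0 0
      ((1 : Matrix V₁ V₁ ℂ) ⊗ₖ (a₂ - 1)))
    (hZ : Z = R₂ * R₁) :
    etaSeries Z (Sum.inr (f₁, f₂))
      = composeSeries (etaSeries a₁ f₁) (etaSeries a₂ f₂) := by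
  classical
  subst hZ
  set P₁ : Matrix (V₁ × V₂ × V₂) (V₁ × V₂ × V₂) ℂ :=
    (a₁ - 1) ⊗ₖ (Matrix.single e₂ e₂ (1 : ℂ) ⊗ₖ Matrix.single f₂ f₂ (1 : ℂ))
  set Q₁ : Matrix (V₁ × V₂) (V₁ × V₂) ℂ :=
    (a₁ - 1) ⊗ₖ Matrix.single f₂ f₂ (1 : ℂ)
  set P₂ : Matrix (V₁ × V₂ × V₂) (V₁ × V₂ × V₂) ℂ :=
    Matrix.single e₁ e₁ (1 : ℂ) ⊗ₖ ((a₂ - 1) ⊗ₖ (1 : Matrix V₂ V₂ ℂ))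
      + (1 - Matrix.single e₁ e₁ (1 : ℂ)) ⊗ₖ ((1 : Matrix V₂ V₂ ℂ) ⊗ₖ (a₂ - 1))
  set Q₂ : Matrix (V₁ × V₂) (V₁ × V₂) ℂ := (1 : Matrix V₁ V₁ ℂ) ⊗ₖ (a₂ - 1)
  have hblocks : R₂ * R₁
      = Matrix.fromBlocks ((1 + P₂) * (1 + P₁)) 0 0 ((1 + Q₂) * (1 + Q₁)) := by
    rw [hR₁, hR₂, ← Matrix.fromBlocks_one, Matrix.fromBlocks_add,
      Matrix.fromBlocks_add, Matrix.fromBlocks_multiply]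
    simp
  have hpsi : psiSeries (R₂ * R₁) (Sum.inr (f₁, f₂))
      = psiSeries ((1 + Q₂) * (1 + Q₁)) (f₁, f₂) := by
    apply PowerSeries.ext
    intro n
    rw [psiSeries, psiSeries, coeff_mk, coeff_mk]
    by_cases h : n = 0
    · simp [h]
    · rw [if_neg h, if_neg h, hblocks, fromBlocks_pow, Matrix.fromBlocks_apply₂₂]
  have heta : etaSeries (R₂ * R₁) (Sum.inr (f₁, f₂))
      = etaSeries ((1 + Q₂) * (1 + Q₁)) (f₁, f₂) := by
    rw [etaSeries, etaSeries, hpsi]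
  rw [heta]
  exact core_eta a₁ a₂ f₁ f₂
end

section
/- Let R be a commutative ring and let f, g, q ∈ R[[z]] be formal power series with zero constant term, with coefficients f = Σ_{r≥1} a_r z^r, g = Σ_{k≥1} b_k z^k, q = Σ_{k≥1} c_k z^k. Let h ∈ R[[z]] be the formal power series with zero constant term whose n-th coefficient (n ≥ 1) is h_n = Σ_{r=1}^{n} a_r · Σ_{(k₁,…,k_r)} b_{k₁} b_{k₂} ⋯ b_{k_{r−1}} · c_{k_r}, the inner sum running over all r-tuples of positive integers with k₁ + ⋯ + k_r = n. Then q · (f ∘ g) = g · h, where f ∘ g denotes substitution of g into f. (This identity is the η-series form of the decomposition μ₁ ▷_{ν₂} μ₂ = (μ₁ ∠ ν₂) ⧆ μ₂ of the c-monotone multiplicative convolution into the orthogonal multiplicative convolution followed by the boolean multiplicative convolution, with f = η_{μ₁}, g = η_{ν₂}, q = η_{μ₂}, h = η_{μ₁ ▷_{ν₂} μ₂}.) -/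
open PowerSeries

/-- Coefficient of a product of power series indexed by `Fin r`, as a sum over
`antidiagonalTuple`. -/
lemma coeff_prod_fin {R : Type*} [CommSemiring R] (r n : ℕ) (F : Fin r → PowerSeries R) :
    PowerSeries.coeff n (∏ i, F i) =
      ∑ k ∈ Finset.Nat.antidiagonalTuple r n, ∏ i, PowerSeries.coeff (k i) (F i) := by
  rw [PowerSeries.coeff_prod]
  refine Finset.sum_nbij' (fun l => ⇑l) (fun k => Finsupp.equivFunOnFinite.symm k)
    ?_ ?_ ?_ ?_ ?_
  · intro l hl
    rw [Finset.mem_finsuppAntidiag] at hl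
    rw [Finset.Nat.mem_antidiagonalTuple]
    exact hl.1
  · intro k hk
    rw [Finset.Nat.mem_antidiagonalTuple] at hk
    rw [Finset.mem_finsuppAntidiag]
    exact ⟨hk, Finset.subset_univ _⟩
  · intro l _; exact Finsupp.equivFunOnFinite.symm_apply_apply l
  · intro k _; rfl
  · intro l _; rfl

/-- Low coefficients of `gᵏ · q` vanish when `g` and `q` have zero constant term. -/
lemma coeff_pow_mul_eq_zero {R : Type*} [CommRing R] {g q : PowerSeries R}
    (hg : PowerSeries.constantCoeff g = 0) (hq : PowerSeries.constantCoeff q = 0)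
    {m k : ℕ} (h : m < k + 1) :
    PowerSeries.coeff m (g ^ k * q) = 0 := by
  have hdvd : (PowerSeries.X : PowerSeries R) ^ (k + 1) ∣ g ^ k * q := by
    rw [pow_succ]
    exact mul_dvd_mul (pow_dvd_pow_of_dvd (PowerSeries.X_dvd_iff.mpr hg) k)
      (PowerSeries.X_dvd_iff.mpr hq)
  exact (PowerSeries.X_pow_dvd_iff.mp hdvd) m h

/-- Low coefficients of `gʳ` vanish when `g` has zero constant term. -/
lemma coeff_pow_eq_zero'_s13 {R : Type*} [CommRing R] {g : PowerSeries R}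
    (hg : PowerSeries.constantCoeff g = 0) {m r : ℕ} (h : m < r) :
    PowerSeries.coeff m (g ^ r) = 0 := by
  have hdvd : (PowerSeries.X : PowerSeries R) ^ r ∣ g ^ r :=
    pow_dvd_pow_of_dvd (PowerSeries.X_dvd_iff.mpr hg) r
  exact (PowerSeries.X_pow_dvd_iff.mp hdvd) m h

/-- The inner sum in the definition of `h` is a coefficient of `g^(r-1) * q`. -/
lemma inner_sum_eq {R : Type*} [CommRing R] {g q : PowerSeries R}
    (hg : PowerSeries.constantCoeff g = 0) (hq : PowerSeries.constantCoeff q = 0)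
    (r m : ℕ) (hr : 1 ≤ r) :
    (∑ k ∈ (Finset.Nat.antidiagonalTuple r m).filter (fun k => ∀ i, k i ≠ 0),
        ∏ i : Fin r,
          if (i : ℕ) + 1 < r then PowerSeries.coeff (k i) g
          else PowerSeries.coeff (k i) q)
      = PowerSeries.coeff m (g ^ (r - 1) * q) := by
  obtain ⟨s, rfl⟩ : ∃ s, r = s + 1 := ⟨r - 1, (Nat.succ_pred_eq_of_pos hr).symm⟩
  have hfilter :
      (∑ k ∈ (Finset.Nat.antidiagonalTuple (s + 1) m).filter (fun k => ∀ i, k i ≠ 0),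
        ∏ i : Fin (s + 1),
          if (i : ℕ) + 1 < s + 1 then PowerSeries.coeff (k i) g
          else PowerSeries.coeff (k i) q)
      = ∑ k ∈ Finset.Nat.antidiagonalTuple (s + 1) m,
        ∏ i : Fin (s + 1),
          if (i : ℕ) + 1 < s + 1 then PowerSeries.coeff (k i) g
          else PowerSeries.coeff (k i) q := by
    apply Finset.sum_filter_of_ne
    intro k _ hne
    by_contra hcon
    push_neg at hcon
    obtain ⟨i, hi⟩ := hcon
    apply hne
    apply Finset.prod_eq_zero (Finset.mem_univ i)
    rw [hi]
    by_cases hlt : (i : ℕ) + 1 < s + 1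
    · simp [hlt, PowerSeries.coeff_zero_eq_constantCoeff, hg]
    · simp [hlt, PowerSeries.coeff_zero_eq_constantCoeff, hq]
  rw [hfilter]
  have hprod : (∏ i : Fin (s + 1),
      (if (i : ℕ) + 1 < s + 1 then g else q)) = g ^ s * q := by
    rw [Fin.prod_univ_castSucc]
    have h1 : ∀ i : Fin s, ((i.castSucc : ℕ) + 1 < s + 1) := by
      intro i
      simp
    have h2 : ¬ ((Fin.last s : ℕ) + 1 < s + 1) := by simp
    rw [if_neg h2]
    congr 1
    calc (∏ i : Fin s, if ((i.castSucc : ℕ)) + 1 < s + 1 then g else q)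
        = ∏ _i : Fin s, g := by
          apply Finset.prod_congr rfl
          intro i _
          rw [if_pos (h1 i)]
      _ = g ^ s := by simp
  have := coeff_prod_fin (s + 1) m (fun i => if (i : ℕ) + 1 < s + 1 then g else q)
  rw [hprod] at this
  simp only [apply_ite (PowerSeries.coeff _)] at this
  rw [← this, Nat.add_sub_cancel]

/-- the η-series identity `q · (f ∘ g) = g · h` expressing the
decomposition `μ₁ ▷_{ν₂} μ₂ = (μ₁ ∠ ν₂) ⧆ μ₂` of the c-monotone multiplicative
convolution (with `f = η_{μ₁}`, `g = η_{ν₂}`, `q = η_{μ₂}`,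
`h = η_{μ₁ ▷_{ν₂} μ₂}` given by its explicit coefficients). -/
theorem cmonotone_multiplicative_convolution_coefficients
    {R : Type*} [CommRing R]
    (f g q h : PowerSeries R)
    (hf : PowerSeries.constantCoeff f = 0)
    (hg : PowerSeries.constantCoeff g = 0)
    (hq : PowerSeries.constantCoeff q = 0)
    (hh : h = PowerSeries.mk fun n =>
      if n = 0 then 0
      else ∑ r ∈ Finset.Icc 1 n, (PowerSeries.coeff r f) *
        ∑ k ∈ (Finset.Nat.antidiagonalTuple r n).filter (fun k => ∀ i, k i ≠ 0),
          ∏ i : Fin r,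
            if (i : ℕ) + 1 < r then PowerSeries.coeff (k i) g
            else PowerSeries.coeff (k i) q) :
    q * composeSeries f g = g * h := by
  ext n
  -- the common value
  have main :
      PowerSeries.coeff n (q * composeSeries f g)
        = ∑ r ∈ Finset.Icc 1 n, PowerSeries.coeff r f *
            PowerSeries.coeff n (g ^ r * q) := by
    rw [PowerSeries.coeff_mul]
    have step1 : ∀ p ∈ Finset.HasAntidiagonal.antidiagonal n,
        PowerSeries.coeff p.1 q * PowerSeries.coeff p.2 (composeSeries f g)
          = ∑ r ∈ Finset.range (n + 1),
              PowerSeries.coeff r f *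
                (PowerSeries.coeff p.1 q * PowerSeries.coeff p.2 (g ^ r)) := by
      intro p hp
      have hle : p.2 ≤ n := Finset.HasAntidiagonal.antidiagonal.snd_le hp
      simp only [composeSeries, PowerSeries.coeff_mk]
      rw [Finset.mul_sum]
      rw [Finset.sum_subset (Finset.range_subset_range.mpr (by omega : p.2 + 1 ≤ n + 1))]
      · apply Finset.sum_congr rfl
        intro r _
        ring
      · intro r _ hr
        rw [Finset.mem_range] at hr
        push_neg at hr
        rw [coeff_pow_eq_zero'_s13 hg (by omega : p.2 < r)]
        ring
    rw [Finset.sum_congr rfl step1, Finset.sum_comm]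
    have step2 : ∀ r ∈ Finset.range (n + 1),
        (∑ p ∈ Finset.HasAntidiagonal.antidiagonal n,
          PowerSeries.coeff r f *
            (PowerSeries.coeff p.1 q * PowerSeries.coeff p.2 (g ^ r)))
          = PowerSeries.coeff r f * PowerSeries.coeff n (g ^ r * q) := by
      intro r _
      rw [← Finset.mul_sum, ← PowerSeries.coeff_mul, mul_comm q (g ^ r)]
    rw [Finset.sum_congr rfl step2]
    rw [← Finset.sum_subset (by intro x hx; rw [Finset.mem_Icc] at hx; rw [Finset.mem_range]; omega :
        Finset.Icc 1 n ⊆ Finset.range (n + 1))]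
    intro r hr hnot
    rw [Finset.mem_range] at hr
    rw [Finset.mem_Icc] at hnot
    have : r = 0 := by omega
    subst this
    rw [PowerSeries.coeff_zero_eq_constantCoeff, hf, zero_mul]
  rw [main, hh, PowerSeries.coeff_mul]
  have hcoeffh : ∀ m : ℕ,
      (PowerSeries.coeff m (PowerSeries.mk fun n =>
        if n = 0 then 0
        else ∑ r ∈ Finset.Icc 1 n, (PowerSeries.coeff r f) *
          ∑ k ∈ (Finset.Nat.antidiagonalTuple r n).filter (fun k => ∀ i, k i ≠ 0),
            ∏ i : Fin r,
              if (i : ℕ) + 1 < r then PowerSeries.coeff (k i) g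
              else PowerSeries.coeff (k i) q))
      = ∑ r ∈ Finset.Icc 1 m, PowerSeries.coeff r f *
          PowerSeries.coeff m (g ^ (r - 1) * q) := by
    intro m
    rw [PowerSeries.coeff_mk]
    by_cases hm : m = 0
    · subst hm; simp
    · rw [if_neg hm]
      apply Finset.sum_congr rfl
      intro r hr
      rw [Finset.mem_Icc] at hr
      rw [inner_sum_eq hg hq r m hr.1]
  have step3 : ∀ p ∈ Finset.HasAntidiagonal.antidiagonal n,
      PowerSeries.coeff p.1 g *
        (PowerSeries.coeff p.2 (PowerSeries.mk fun n =>
          if n = 0 then 0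
          else ∑ r ∈ Finset.Icc 1 n, (PowerSeries.coeff r f) *
            ∑ k ∈ (Finset.Nat.antidiagonalTuple r n).filter (fun k => ∀ i, k i ≠ 0),
              ∏ i : Fin r,
                if (i : ℕ) + 1 < r then PowerSeries.coeff (k i) g
                else PowerSeries.coeff (k i) q))
        = ∑ r ∈ Finset.Icc 1 n,
            PowerSeries.coeff r f *
              (PowerSeries.coeff p.1 g * PowerSeries.coeff p.2 (g ^ (r - 1) * q)) := by
    intro p hp
    have hle : p.2 ≤ n := Finset.HasAntidiagonal.antidiagonal.snd_le hp
    rw [hcoeffh p.2, Finset.mul_sum]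
    rw [Finset.sum_subset (by intro x hx; rw [Finset.mem_Icc] at hx ⊢; omega :
        Finset.Icc 1 p.2 ⊆ Finset.Icc 1 n)]
    · apply Finset.sum_congr rfl
      intro r _
      ring
    · intro r hr hnot
      rw [Finset.mem_Icc] at hr hnot
      have hlt : p.2 < (r - 1) + 1 := by omega
      rw [coeff_pow_mul_eq_zero hg hq hlt]
      ring
  rw [Finset.sum_congr rfl step3, Finset.sum_comm]
  apply Finset.sum_congr rfl
  intro r hr
  rw [Finset.mem_Icc] at hr
  rw [← Finset.mul_sum, ← PowerSeries.coeff_mul]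
  congr 2
  obtain ⟨s, rfl⟩ : ∃ s, r = s + 1 := ⟨r - 1, (Nat.succ_pred_eq_of_pos hr.1).symm⟩
  simp only [Nat.add_sub_cancel]
  rw [← mul_assoc, mul_comm g (g ^ s), ← pow_succ]
end

section
/- Fix finite types V₁, V₂, a matrix a₂ : Matrix V₂ V₂ ℂ, a matrix a₁ : Matrix V₁ V₁ ℂ, and vertices e₁ ∈ V₁ and e₂, f₂ ∈ V₂. Let W ⊆ V₁ × V₂ × V₂ be the set W = (V₁ × {e₂} × {f₂}) ∪ ((V₁ \ {e₁}) × {e₂} × (V₂ \ {f₂})) ∪ ({e₁} × (V₂ \ {e₂}) × {f₂}), and set S₁ = a₁ ⊗ E_{e₂} ⊗ E_{f₂} and S₂ = E_{e₁} ⊗ a₂ ⊗ 1 + E_{e₁}^⊥ ⊗ 1 ⊗ a₂. Then: (a) for all x, y ∈ W one has (E_{e₁} ⊗ a₂ ⊗ E_{f₂}) x y = (E_{e₁} ⊗ a₂ ⊗ 1) x y and (E_{e₁}^⊥ ⊗ E_{e₂} ⊗ a₂) x y = (E_{e₁}^⊥ ⊗ 1 ⊗ a₂) x y; and (b) for all y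 ∈ W and x ∉ W one has (S₁) x y = 0 and (S₂) x y = 0, so the span of {δ_x : x ∈ W} is invariant under S₁ and S₂. (W is the vertex set V₁ ▷_{f₂} V₂ of the essential component of the c-comb product of birooted graphs, and S₁ + S₂ restricted to W realizes its adjacency matrix.) -/
open Matrix Set
open scoped Kronecker

/-- on the vertex set `W = V₁ ▷_{f₂} V₂` of the essential component of
the c-comb product of birooted graphs, the matrices
`E_{e₁} ⊗ a₂ ⊗ E_{f₂}` and `E_{e₁} ⊗ a₂ ⊗ 1` (resp. `E_{e₁}^⊥ ⊗ E_{e₂} ⊗ a₂` and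
`E_{e₁}^⊥ ⊗ 1 ⊗ a₂`) agree, and `span{δ_x : x ∈ W}` is invariant under `S₁`, `S₂`
(Theorem 4.1 of the paper). -/
theorem ccomb_essential_component_vertex_set_invariance
    {V₁ V₂ : Type*} [Fintype V₁] [DecidableEq V₁] [Fintype V₂] [DecidableEq V₂]
    (a₁ : Matrix V₁ V₁ ℂ) (a₂ : Matrix V₂ V₂ ℂ)
    (e₁ : V₁) (e₂ f₂ : V₂)
    (W : Set (V₁ × V₂ × V₂))
    (hW : W = (Set.univ ×ˢ ({e₂} ×ˢ {f₂}))
      ∪ (({e₁}ᶜ : Set V₁) ×ˢ ({e₂} ×ˢ ({f₂}ᶜ : Set V₂)))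
      ∪ (({e₁} : Set V₁) ×ˢ (({e₂}ᶜ : Set V₂) ×ˢ {f₂})))
    (S₁ S₂ : Matrix (V₁ × V₂ × V₂) (V₁ × V₂ × V₂) ℂ)
    (hS₁ : S₁ = a₁ ⊗ₖ (Matrix.single e₂ e₂ (1 : ℂ) ⊗ₖ Matrix.single f₂ f₂ (1 : ℂ)))
    (hS₂ : S₂ = Matrix.single e₁ e₁ (1 : ℂ) ⊗ₖ (a₂ ⊗ₖ (1 : Matrix V₂ V₂ ℂ))
      + (1 - Matrix.single e₁ e₁ (1 : ℂ)) ⊗ₖ ((1 : Matrix V₂ V₂ ℂ) ⊗ₖ a₂)) :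
    -- (a)
    (∀ x ∈ W, ∀ y ∈ W,
      (Matrix.single e₁ e₁ (1 : ℂ) ⊗ₖ (a₂ ⊗ₖ Matrix.single f₂ f₂ (1 : ℂ))) x y
          = (Matrix.single e₁ e₁ (1 : ℂ) ⊗ₖ (a₂ ⊗ₖ (1 : Matrix V₂ V₂ ℂ))) x y
      ∧ ((1 - Matrix.single e₁ e₁ (1 : ℂ)) ⊗ₖ (Matrix.single e₂ e₂ (1 : ℂ) ⊗ₖ a₂)) x y
          = ((1 - Matrix.single e₁ e₁ (1 : ℂ)) ⊗ₖ ((1 : Matrix V₂ V₂ ℂ) ⊗ₖ a₂)) x y)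
    ∧
    -- (b)
    (∀ y ∈ W, ∀ x ∉ W, S₁ x y = 0 ∧ S₂ x y = 0) := by
  subst hW hS₁ hS₂
  constructor
  · rintro ⟨x1, x2, x3⟩ hx ⟨y1, y2, y3⟩ hy
    simp only [Set.mem_union, Set.mem_prod, Set.mem_univ, Set.mem_singleton_iff,
      Set.mem_compl_iff, true_and] at hx hy
    constructor
    · simp only [Matrix.kroneckerMap_apply, Matrix.single, Matrix.of_apply,
        Matrix.one_apply]
      by_cases h1 : e₁ = x1 ∧ e₁ = y1
      · obtain ⟨hx1, hy1⟩ := h1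
        have hx3 : x3 = f₂ := by
          rcases hx with ⟨_, h⟩ | ⟨h, _, _⟩ | ⟨_, _, h⟩ <;> simp_all
        have hy3 : y3 = f₂ := by
          rcases hy with ⟨_, h⟩ | ⟨h, _, _⟩ | ⟨_, _, h⟩ <;> simp_all
        subst hx3 hy3
        simp [← hx1, ← hy1]
      · simp [h1]
    · simp only [Matrix.kroneckerMap_apply, Matrix.single, Matrix.of_apply,
        Matrix.one_apply, Matrix.sub_apply]
      by_cases h0 : x1 = y1
      · subst h0
        by_cases h1 : e₁ = x1
        · simp [h1]
        · have hx2 : x2 = e₂ := by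
            rcases hx with ⟨h, _⟩ | ⟨_, h, _⟩ | ⟨h, _, _⟩ <;> simp_all
          have hy2 : y2 = e₂ := by
            rcases hy with ⟨h, _⟩ | ⟨_, h, _⟩ | ⟨h, _, _⟩ <;> simp_all
          subst hx2 hy2
          simp [h1]
      · have hne : ¬(e₁ = x1 ∧ e₁ = y1) := fun h => h0 (h.1.symm.trans h.2)
        simp [h0, hne]
  · rintro ⟨y1, y2, y3⟩ hy ⟨x1, x2, x3⟩ hx
    simp only [Set.mem_union, Set.mem_prod, Set.mem_univ, Set.mem_singleton_iff,
      Set.mem_compl_iff, true_and, not_or] at hx hy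
    obtain ⟨⟨hA, hB⟩, hC⟩ := hx
    constructor
    · simp only [Matrix.kroneckerMap_apply, Matrix.single, Matrix.of_apply]
      by_cases h2 : e₂ = x2
      · by_cases h3 : f₂ = x3
        · exact absurd ⟨h2.symm, h3.symm⟩ hA
        · simp [h3]
      · simp [h2]
    · simp only [Matrix.add_apply, Matrix.kroneckerMap_apply, Matrix.single,
        Matrix.of_apply, Matrix.one_apply, Matrix.sub_apply]
      have hT1 : (if e₁ = x1 ∧ e₁ = y1 then (1:ℂ) else 0) * (a₂ x2 y2 * if x3 = y3 then (1:ℂ) else 0) = 0 := by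
        by_cases h1 : e₁ = x1 ∧ e₁ = y1
        · by_cases h3 : x3 = y3
          · exfalso
            have hy1 : y1 = e₁ := h1.2.symm
            have hy3 : y3 = f₂ := by
              rcases hy with (⟨_, h⟩ | ⟨h, _, _⟩) | ⟨_, _, h⟩
              · exact h
              · exact absurd hy1 h
              · exact h
            subst h3 hy3
            have hx2 : x2 ≠ e₂ := fun h => hA ⟨h, rfl⟩
            exact hC ⟨h1.1.symm, hx2, rfl⟩
          · simp [h3]
        · simp [h1]
      have hT2 : ((if x1 = y1 then (1:ℂ) else 0) - if e₁ = x1 ∧ e₁ = y1 then (1:ℂ) else 0) * ((if x2 = y2 then (1:ℂ) else 0) * a₂ x3 y3) = 0 := by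
        by_cases h0 : x1 = y1
        · by_cases h1 : e₁ = x1
          · simp [h0, h1, h1.trans h0]
          · by_cases h2 : x2 = y2
            · exfalso
              have hy2 : y2 = e₂ := by
                rcases hy with ⟨h, _⟩ | ⟨_, h, _⟩ | ⟨h, _, _⟩ <;> simp_all
              subst h2 hy2
              by_cases h3 : x3 = f₂
              · exact hA ⟨rfl, h3⟩
              · exact hB ⟨fun h => h1 h.symm, rfl, h3⟩
            · simp [h2]
        · have hne : ¬(e₁ = x1 ∧ e₁ = y1) := fun h => h0 (h.1.symm.trans h.2)
          simp [h0, hne]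
      rw [hT1, hT2, add_zero]
end
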